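/- arXiv:math/0103240 — 2 statements merged into one kernel-verified Lean document; each statement's English description precedes it below -/
import Mathlib

section
/- Let H be a finite group of order 10, 15, or 20, and let G be an extension of ℤ/5ℤ by H (i.e., there is a short exact sequence 1 → H → G → ℤ/5ℤ → 1). Then the abelianization of G is not a 5-group. -/
/-!
The order of `G` is `25 m` with `m ∈ {2, 3, 4}`, so a Sylow `5`-subgroup `P` has index `m < 5`.
The number of Sylow `5`-subgroups divides `m` and is `1 mod 5`, hence `P` is normal. The quotient
`G ⧸ P` has order `m < 6`, so it is abelian and therefore a quotient of the abelianization; since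
`m` is not a power of `5`, the abelianization is not a `5`-group.
-/

theorem isMulCommutative_of_card_lt_six {K : Type*} [Group K] [Finite K] (h : Nat.card K < 6) :
    IsMulCommutative K := by
  have hpos : 0 < Nat.card K := Nat.card_pos
  interval_cases hK : Nat.card K
  · have : Subsingleton K := (Nat.card_eq_one_iff_unique.mp hK).1
    exact ⟨⟨fun a b => Subsingleton.elim _ _⟩⟩
  · have : IsCyclic K := isCyclic_of_prime_card (p := 2) hK
    infer_instance
  · have : IsCyclic K := isCyclic_of_prime_card (p := 3) hK
    infer_instance
  · have : Fact (Nat.Prime 2) := ⟨Nat.prime_two⟩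
    exact IsPGroup.isMulCommutative_of_card_eq_prime_sq (p := 2) hK
  · have : Fact (Nat.Prime 5) := ⟨by norm_num⟩
    have : IsCyclic K := isCyclic_of_prime_card (p := 5) hK
    infer_instance

theorem IsPGroup.quotient_of_abelianization {G : Type*} [Group G] {p : ℕ}
    (hp : IsPGroup p (Abelianization G)) (N : Subgroup G) [N.Normal]
    [IsMulCommutative (G ⧸ N)] : IsPGroup p (G ⧸ N) := by
  have hle : commutator G ≤ N := Subgroup.Normal.quotient_commutative_iff_commutator_le.mp ‹_›
  exact hp.of_surjective _
    (QuotientGroup.map_surjective_of_surjective (commutator G) N (MonoidHom.id G)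
      QuotientGroup.mk_surjective hle)

namespace Sylow

variable {G : Type*} [Group G] [Finite G] {p : ℕ} [hp : Fact p.Prime]

theorem index_eq_of_card_eq (P : Sylow p G) {a m : ℕ} (hG : Nat.card G = p ^ a * m)
    (hm : ¬ p ∣ m) : (P : Subgroup G).index = m := by
  have hm0 : m ≠ 0 := by rintro rfl; simp at hm
  have hP : Nat.card P = p ^ a := by
    rw [P.card_eq_multiplicity, hG, Nat.factorization_mul (pow_ne_zero _ hp.out.ne_zero) hm0,
      Finsupp.add_apply, Nat.factorization_pow_self hp.out,
      Nat.factorization_eq_zero_of_not_dvd hm, add_zero]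
  have h := (P : Subgroup G).card_mul_index
  rw [hP, hG] at h
  exact Nat.eq_of_mul_eq_mul_left (pow_pos hp.out.pos _) h

theorem normal_of_index_le (P : Sylow p G) (h : (P : Subgroup G).index ≤ p) :
    (P : Subgroup G).Normal := by
  have hindex : 0 < (P : Subgroup G).index := Nat.pos_of_ne_zero Subgroup.index_ne_zero_of_finite
  have hlt : Nat.card (Sylow p G) < p :=
    (Nat.le_of_dvd hindex P.card_dvd_index).trans_lt
      (h.lt_of_ne fun heq => P.not_dvd_index (heq.symm ▸ dvd_rfl))
  have hcard : Nat.card (Sylow p G) = 1 :=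
    (card_sylow_modEq_one p G).eq_of_lt_of_lt hlt hp.out.one_lt
  have : Subsingleton (Sylow p G) := (Nat.card_eq_one_iff_unique.mp hcard).1
  exact normal_of_subsingleton P

end Sylow

/-- If `G` is an extension of `ℤ/5ℤ` by a group `H` of order 10, 15 or 20
(i.e. `H ⊴ G` with `G/H ≅ ℤ/5ℤ`), then the abelianization of `G` is not a
5-group. -/
theorem stmt6 {G : Type*} [Group G] [Finite G] (H : Subgroup G) (hN : H.Normal)
    (hH : Nat.card H = 10 ∨ Nat.card H = 15 ∨ Nat.card H = 20)
    (hQ : Nonempty ((G ⧸ H) ≃* Multiplicative (ZMod 5))) :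
    ¬ IsPGroup 5 (Abelianization G) := by
  intro hab
  have : Fact (Nat.Prime 5) := ⟨by norm_num⟩
  have hGH : Nat.card (G ⧸ H) = 5 := by
    simpa using Nat.card_congr hQ.some.toEquiv
  obtain ⟨m, hm, hHm⟩ : ∃ m, (m = 2 ∨ m = 3 ∨ m = 4) ∧ Nat.card H = 5 * m := by
    rcases hH with h | h | h
    exacts [⟨2, by simp, h⟩, ⟨3, by simp, h⟩, ⟨4, by simp, h⟩]
  have hG : Nat.card G = 5 ^ 2 * m := by
    rw [Subgroup.card_eq_card_quotient_mul_card_subgroup H, hGH, hHm]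
    ring
  obtain ⟨P⟩ : Nonempty (Sylow 5 G) := inferInstance
  have hPm : (P : Subgroup G).index = m := P.index_eq_of_card_eq hG (by omega)
  have : (P : Subgroup G).Normal := P.normal_of_index_le (by omega)
  have hcard : Nat.card (G ⧸ (P : Subgroup G)) = m := by rw [← Subgroup.index_eq_card, hPm]
  have : IsMulCommutative (G ⧸ (P : Subgroup G)) := isMulCommutative_of_card_lt_six (by omega)
  rcases (hab.quotient_of_abelianization P).card_eq_or_dvd with h | h <;> rw [hcard] at h <;> omega
end

section
/- Let R be a commutative ring of characteristic 3 and a ∈ R. Suppose the 2×2 matrices σ = [[1,a],[0,1]] and τ = [[1,0],[1,1]] over R generate a group M of order 27. Then a = 0. -/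
/-!
A group of order 27 has nontrivial center, so its central quotient has order dividing 9 and is
abelian: every commutator is central. Hence `⁅σ, τ⁆ = !![1 + a + a², -a²; a, 1 - a]` commutes
with `τ`; comparing entries gives `a² = 0` and `2a + a² = 0`, so `2a = 0`, and `a = 0` since
`3 = 0`.
-/

open scoped commutatorElement

theorem IsPGroup.commutator_le_center_of_card_eq_prime_pow_three {G : Type*} [Group G] {p : ℕ}
    [hp : Fact p.Prime] (hG : Nat.card G = p ^ 3) : commutator G ≤ Subgroup.center G := by
  rw [← Subgroup.Normal.quotient_commutative_iff_commutator_le]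
  obtain ⟨k, hk0, hk⟩ := IsPGroup.card_center_eq_prime_pow hG (by norm_num)
  have hquot : Nat.card (G ⧸ Subgroup.center G) ∣ p ^ 2 := by
    rw [← mul_dvd_mul_iff_left hp.out.ne_zero, ← pow_succ', ← hG,
      ← (Subgroup.center G).card_mul_index]
    exact mul_dvd_mul_right (hk ▸ dvd_pow_self p hk0.ne') _
  obtain ⟨j, hj, hcard⟩ := (Nat.dvd_prime_pow hp.out).1 hquot
  rcases (show j ≤ 1 ∨ j = 2 by omega) with hj | rfl
  · have : IsCyclic (G ⧸ Subgroup.center G) :=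
      isCyclic_of_card_dvd_prime (p := p) (by simpa [hcard] using pow_dvd_pow p hj)
    exact IsCyclic.isMulCommutative
  · exact IsPGroup.isMulCommutative_of_card_eq_prime_sq hcard

section Unitriangular

variable {R : Type*} [CommRing R] {a : R} {σ τ : (Matrix (Fin 2) (Fin 2) R)ˣ}

theorem coe_inv_eq_of_coe_eq_upper_unitriangular
    (hσ : (σ : Matrix (Fin 2) (Fin 2) R) = !![1, a; 0, 1]) :
    (↑σ⁻¹ : Matrix (Fin 2) (Fin 2) R) = !![1, -a; 0, 1] := by
  apply Units.inv_eq_of_mul_eq_one_right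
  rw [hσ, Matrix.mul_fin_two, Matrix.one_fin_two]
  simp

theorem coe_inv_eq_of_coe_eq_lower_unitriangular
    (hτ : (τ : Matrix (Fin 2) (Fin 2) R) = !![1, 0; 1, 1]) :
    (↑τ⁻¹ : Matrix (Fin 2) (Fin 2) R) = !![1, 0; -1, 1] := by
  apply Units.inv_eq_of_mul_eq_one_right
  rw [hτ, Matrix.mul_fin_two, Matrix.one_fin_two]
  simp

theorem coe_commutatorElement_unitriangular
    (hσ : (σ : Matrix (Fin 2) (Fin 2) R) = !![1, a; 0, 1])
    (hτ : (τ : Matrix (Fin 2) (Fin 2) R) = !![1, 0; 1, 1]) :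
    (↑⁅σ, τ⁆ : Matrix (Fin 2) (Fin 2) R) = !![1 + a + a ^ 2, -a ^ 2; a, 1 - a] := by
  rw [commutatorElement_def, Units.val_mul, Units.val_mul, Units.val_mul, hσ, hτ,
    coe_inv_eq_of_coe_eq_upper_unitriangular hσ, coe_inv_eq_of_coe_eq_lower_unitriangular hτ]
  simp only [Matrix.mul_fin_two]
  congrm !![?_, ?_; ?_, ?_] <;> ring

theorem two_mul_eq_zero_of_commute_lower_unitriangular
    (h : Commute !![(1 : R), 0; 1, 1] !![1 + a + a ^ 2, -a ^ 2; a, 1 - a]) : 2 * a = 0 := by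
  have h' := h.eq
  simp only [Matrix.mul_fin_two] at h'
  have e00 : a ^ 2 = 0 := by simpa using congrFun₂ h' 0 0
  have e10 : 2 * a + a ^ 2 = 0 := by
    have := congrFun₂ h' 1 0
    simp only [Matrix.of_apply, Matrix.cons_val', Matrix.cons_val_zero, Matrix.cons_val_one,
      Matrix.cons_val_fin_one] at this
    linear_combination this
  linear_combination e10 - e00

end Unitriangular

/-- If `R` is a commutative ring of characteristic 3, `a ∈ R`, and the invertible
matrices `σ = [[1,a],[0,1]]` and `τ = [[1,0],[1,1]]` generate a group of order
27, then `a = 0`. -/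
theorem stmt9 {R : Type*} [CommRing R] (hchar : (3 : R) = 0) (a : R)
    (σ τ : (Matrix (Fin 2) (Fin 2) R)ˣ)
    (hσ : (σ : Matrix (Fin 2) (Fin 2) R) = !![1, a; 0, 1])
    (hτ : (τ : Matrix (Fin 2) (Fin 2) R) = !![1, 0; 1, 1])
    (hM : Nat.card (Subgroup.closure {σ, τ}) = 27) :
    a = 0 := by
  set M := Subgroup.closure {σ, τ}
  have hσM : σ ∈ M := Subgroup.subset_closure (by simp)
  have hτM : τ ∈ M := Subgroup.subset_closure (by simp)
  have hcentral : ⁅(⟨σ, hσM⟩ : M), ⟨τ, hτM⟩⁆ ∈ Subgroup.center M :=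
    IsPGroup.commutator_le_center_of_card_eq_prime_pow_three (p := 3) hM
      (Subgroup.commutator_mem_commutator (Subgroup.mem_top _) (Subgroup.mem_top _))
  have hcomm : Commute (τ : Matrix (Fin 2) (Fin 2) R) ↑⁅σ, τ⁆ :=
    congrArg (Units.val ∘ Subtype.val) (Subgroup.mem_center_iff.mp hcentral ⟨τ, hτM⟩)
  rw [hτ, coe_commutatorElement_unitriangular hσ hτ] at hcomm
  linear_combination a * hchar - two_mul_eq_zero_of_commute_lower_unitriangular hcomm
end
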